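/- For every s ∈ ℂ, the sequence n ↦ 2^{−n} · log(max(|f_s^n(0)|, |f_{s+10}^n(0)|, 1)) converges to a strictly positive limit. Equivalently, G(s, 0, 0) > 0 for all s ∈ ℂ, where G(s, x, y) = max{G_s(x), G_{s+10}(y)}. -/

import Mathlib

/-!
Each step of `z ↦ z ^ 2 + c` changes `log (max ‖z‖ 1)` by a factor 2 up to an additive error of
at most `log (1 + ‖c‖)`, so the normalised sequences `2⁻ⁿ log (max ‖f_cⁿ(z)‖ 1)` are Cauchy with
geometric rate. Once `‖z‖ ≥ max ‖c‖ 2` the orbit grows like `‖z_{n+1}‖ ≥ ‖z_n‖² / 2`; since the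
orbit of `0` passes through `c`, the limit at `z = 0` is at least `log (‖c‖ / 2) / 2 > 0` whenever
`‖c‖ > 2`, and at least one of `‖s‖`, `‖s + 10‖` exceeds 2.
-/

open Filter Topology

lemma Real.abs_log_sub_log_le_log {x y k : ℝ} (hx : 0 < x) (hy : 0 < y)
    (hxy : x ≤ k * y) (hyx : y ≤ k * x) : |Real.log x - Real.log y| ≤ Real.log k := by
  have hk : 0 < k := pos_of_mul_pos_left (hx.trans_le hxy) hy.le
  have h₁ := Real.log_le_log hx hxy
  have h₂ := Real.log_le_log hy hyx
  rw [Real.log_mul hk.ne' hy.ne'] at h₁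
  rw [Real.log_mul hk.ne' hx.ne'] at h₂
  exact abs_sub_le_iff.2 ⟨by linarith, by linarith⟩

lemma Real.log_max_max_one (a b : ℝ) :
    Real.log (max (max a b) 1) = max (Real.log (max a 1)) (Real.log (max b 1)) := by
  rw [← Real.strictMonoOn_log.monotoneOn.map_max
    (lt_of_lt_of_le one_pos (le_max_right a 1)) (lt_of_lt_of_le one_pos (le_max_right b 1)),
    max_max_max_comm, max_self]

section QuadraticFamily

variable {𝕜 : Type*} [NormedDivisionRing 𝕜]

lemma norm_sq_add_le (z c : 𝕜) : ‖z ^ 2 + c‖ ≤ ‖z‖ ^ 2 + ‖c‖ := by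
  rw [← norm_pow]
  exact norm_add_le _ _

lemma norm_sq_le_norm_sq_add_add (z c : 𝕜) : ‖z‖ ^ 2 ≤ ‖z ^ 2 + c‖ + ‖c‖ := by
  have := norm_sub_le (z ^ 2 + c) c
  rwa [add_sub_cancel_right, norm_pow] at this

lemma abs_log_max_norm_sq_add_sub_le (z c : 𝕜) :
    |Real.log (max ‖z ^ 2 + c‖ 1) - 2 * Real.log (max ‖z‖ 1)| ≤ Real.log (1 + ‖c‖) := by
  set m := max ‖z‖ 1
  set M := max ‖z ^ 2 + c‖ 1
  have hm : 1 ≤ m := le_max_right _ _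
  have hM : 1 ≤ M := le_max_right _ _
  have hzm : ‖z‖ ≤ m := le_max_left _ _
  have hc := norm_nonneg c
  have hz2 : ‖z‖ ^ 2 ≤ m ^ 2 := pow_le_pow_left₀ (norm_nonneg z) hzm 2
  have hupper := norm_sq_add_le z c
  have hlower := norm_sq_le_norm_sq_add_add z c
  have hm2 : m ^ 2 ≤ (1 + ‖c‖) * M := by
    rcases max_choice ‖z‖ 1 with h | h <;> simp only [m, h]
    · nlinarith [le_max_left ‖z ^ 2 + c‖ 1]
    · nlinarith
  rw [← Nat.cast_ofNat, ← Real.log_pow]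
  refine Real.abs_log_sub_log_le_log (by positivity) (by positivity) ?_ hm2
  have hcm : ‖c‖ ≤ ‖c‖ * m ^ 2 := le_mul_of_one_le_right hc (one_le_pow₀ hm)
  exact max_le (by nlinarith) (by nlinarith)

/-- Its limit is the escape rate `G_c(z)`. -/
noncomputable def quadGreenApprox (c z : 𝕜) (n : ℕ) : ℝ :=
  ((2 : ℝ) ^ n)⁻¹ * Real.log (max ‖(fun w : 𝕜 => w ^ 2 + c)^[n] z‖ 1)

lemma quadGreenApprox_succ (c z : 𝕜) (n : ℕ) :
    quadGreenApprox c z (n + 1) = quadGreenApprox c (z ^ 2 + c) n / 2 := by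
  rw [quadGreenApprox, quadGreenApprox, Function.iterate_succ_apply, pow_succ, mul_inv]
  ring

lemma dist_quadGreenApprox_succ_le (c z : 𝕜) (n : ℕ) :
    dist (quadGreenApprox c z n) (quadGreenApprox c z (n + 1)) ≤
      Real.log (1 + ‖c‖) / 2 * (1 / 2) ^ n := by
  have h := abs_log_max_norm_sq_add_sub_le ((fun w : 𝕜 => w ^ 2 + c)^[n] z) c
  rw [← Function.iterate_succ_apply' (fun w : 𝕜 => w ^ 2 + c), abs_sub_comm] at h
  have hdiff : quadGreenApprox c z n - quadGreenApprox c z (n + 1) =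
      ((2 : ℝ) ^ (n + 1))⁻¹ * (2 * Real.log (max ‖(fun w : 𝕜 => w ^ 2 + c)^[n] z‖ 1) -
        Real.log (max ‖(fun w : 𝕜 => w ^ 2 + c)^[n + 1] z‖ 1)) := by
    rw [quadGreenApprox, quadGreenApprox, pow_succ, mul_inv]
    ring
  calc dist (quadGreenApprox c z n) (quadGreenApprox c z (n + 1))
      = ((2 : ℝ) ^ (n + 1))⁻¹ * |2 * Real.log (max ‖(fun w : 𝕜 => w ^ 2 + c)^[n] z‖ 1) -
          Real.log (max ‖(fun w : 𝕜 => w ^ 2 + c)^[n + 1] z‖ 1)| := by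
        rw [Real.dist_eq, hdiff, abs_mul, abs_of_pos (by positivity)]
    _ ≤ ((2 : ℝ) ^ (n + 1))⁻¹ * Real.log (1 + ‖c‖) := by gcongr
    _ = Real.log (1 + ‖c‖) / 2 * (1 / 2) ^ n := by
        rw [one_div, inv_pow, pow_succ, mul_inv]
        ring

lemma exists_tendsto_quadGreenApprox (c z : 𝕜) :
    ∃ L, Tendsto (quadGreenApprox c z) atTop (𝓝 L) :=
  cauchySeq_tendsto_of_complete <|
    cauchySeq_of_le_geometric _ _ (by norm_num) (dist_quadGreenApprox_succ_le c z)

lemma norm_sq_div_two_le_norm_sq_add {z c : 𝕜} (hc : ‖c‖ ≤ ‖z‖) (hz : 2 ≤ ‖z‖) :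
    ‖z‖ ^ 2 / 2 ≤ ‖z ^ 2 + c‖ := by
  nlinarith [norm_sq_le_norm_sq_add_add z c]

lemma two_mul_div_two_pow_le_norm_iterate {z c : 𝕜} (hc : ‖c‖ ≤ ‖z‖) (hz : 2 ≤ ‖z‖) (n : ℕ) :
    2 * (‖z‖ / 2) ^ 2 ^ n ≤ ‖(fun w : 𝕜 => w ^ 2 + c)^[n] z‖ := by
  induction n generalizing z with
  | zero => simp only [pow_zero, pow_one, Function.iterate_zero_apply]; linarith
  | succ n ih =>
    have hstep := norm_sq_div_two_le_norm_sq_add hc hz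
    have hgrow : ‖z‖ ≤ ‖z ^ 2 + c‖ := by nlinarith
    calc 2 * (‖z‖ / 2) ^ 2 ^ (n + 1) = 2 * ((‖z‖ / 2) ^ 2) ^ 2 ^ n := by rw [pow_succ, pow_mul']
      _ ≤ 2 * (‖z ^ 2 + c‖ / 2) ^ 2 ^ n := by gcongr; linarith
      _ ≤ ‖(fun w : 𝕜 => w ^ 2 + c)^[n + 1] z‖ :=
        ih (hc.trans hgrow) (hz.trans hgrow)

lemma log_div_two_le_quadGreenApprox {z c : 𝕜} (hc : ‖c‖ ≤ ‖z‖) (hz : 2 ≤ ‖z‖) (n : ℕ) :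
    Real.log (‖z‖ / 2) ≤ quadGreenApprox c z n := by
  have hz' : 1 ≤ ‖z‖ / 2 := by linarith
  have hpow : 1 ≤ (‖z‖ / 2) ^ 2 ^ n := one_le_pow₀ hz'
  calc Real.log (‖z‖ / 2) = ((2 : ℝ) ^ n)⁻¹ * Real.log ((‖z‖ / 2) ^ 2 ^ n) := by
        rw [Real.log_pow, Nat.cast_pow, Nat.cast_ofNat, ← mul_assoc,
          inv_mul_cancel₀ (by positivity), one_mul]
    _ ≤ quadGreenApprox c z n := by
        unfold quadGreenApprox
        gcongr
        exact le_max_of_le_left <|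
            (le_mul_of_one_le_left (by positivity) one_le_two).trans
              (two_mul_div_two_pow_le_norm_iterate hc hz n)

lemma pos_of_tendsto_quadGreenApprox_zero {c : 𝕜} {L : ℝ} (hc : 2 < ‖c‖)
    (hL : Tendsto (quadGreenApprox c 0) atTop (𝓝 L)) : 0 < L := by
  have hpos : 0 < Real.log (‖c‖ / 2) / 2 := by
    have := Real.log_pos (show 1 < ‖c‖ / 2 by linarith)
    positivity
  refine hpos.trans_le <| ge_of_tendsto ((tendsto_add_atTop_iff_nat 1).2 hL) <|
    Eventually.of_forall fun n => ?_
  rw [quadGreenApprox_succ, zero_pow two_ne_zero, zero_add]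
  exact div_le_div_of_nonneg_right (log_div_two_le_quadGreenApprox le_rfl hc.le n) zero_le_two

end QuadraticFamily

theorem green_potential_positive (s : ℂ) :
    ∃ L : ℝ, 0 < L ∧
      Tendsto (fun n : ℕ =>
          ((2 : ℝ) ^ n)⁻¹ * Real.log
            (max (max ‖(fun w : ℂ => w ^ 2 + s)^[n] 0‖
                      ‖(fun w : ℂ => w ^ 2 + (s + 10))^[n] 0‖) 1))
        atTop (nhds L) := by
  obtain ⟨L₁, hL₁⟩ := exists_tendsto_quadGreenApprox s 0
  obtain ⟨L₂, hL₂⟩ := exists_tendsto_quadGreenApprox (s + 10) 0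
  refine ⟨max L₁ L₂, ?_, (hL₁.max hL₂).congr fun n => ?_⟩
  · rcases lt_or_ge 2 ‖s‖ with hs | hs
    · exact lt_max_of_lt_left (pos_of_tendsto_quadGreenApprox_zero hs hL₁)
    · have h10 : 2 < ‖s + 10‖ := by
        have := norm_sub_norm_le (10 : ℂ) (-s)
        rw [sub_neg_eq_add, add_comm, norm_neg] at this
        norm_num at this
        linarith
      exact lt_max_of_lt_right (pos_of_tendsto_quadGreenApprox_zero h10 hL₂)
  · rw [Real.log_max_max_one, mul_max_of_nonneg _ _ (by positivity)]
    rfl
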